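/- Let S = {p₁,…,p_m} be a finite set of probability distributions, each on n states with values sorted nonincreasingly, let G_S be the greedy coupling output distribution, and let z ≥ 2 be an integer. Then H(G_S) ≤ H(∧S) + H(Geom_{1/z}) − log₂(z−1). -/

import Mathlib

open Finset Real MeasureTheory

/-!
Write the entropy (in nats) of a sub-probability sequence as a layer-cake integral: since
`a log (1/a) = ∫_a^1 a/x dx`, we get `H(g) = ∫_0^1 x⁻¹ ∑_{g t < x} g t dx`, while
`∫_0^1 x⁻¹ min(b, x) dx = b + b log (1/b)`. So `H(G) ≤ 1 + H(M)` follows once, for every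
threshold `x > 0`, `∑_{G t < x} G t ≤ ∑_j min (M j, x)`.

For the greedy output, let `T` be the first step with `G T < x`; only steps from `T` on
contribute, so the left side is at most `1 - ∑_{t<T} G t`. The distribution attaining `G T` has
all residual entries at most `G T` and has lost `∑_{t<T} G t` in total, so the first `i+1` values
of the meet sum to at most `(i+1) x + ∑_{t<T} G t`. As `M` is sorted, this bounds
`∑_j (M j - x)⁺` by `∑_{t<T} G t`, which is the claim.

Finally `H(Geom_{1/z}) - log (z-1) = z log (z/(z-1)) ≥ 1` nat.
-/

theorem ofReal_negMulLog_eq_setLIntegral {a : ℝ} (ha : 0 ≤ a) (ha1 : a ≤ 1) :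
    ENNReal.ofReal (negMulLog a) = ∫⁻ x in Set.Ioc a 1, ENNReal.ofReal (a * x⁻¹) := by
  rcases ha.eq_or_lt with rfl | ha0
  · simp
  have hint : IntegrableOn (fun x => a * x⁻¹) (Set.Ioc a 1) :=
    (continuousOn_const.mul (continuousOn_inv₀.mono fun x hx => (ha0.trans_le hx.1).ne')
      |>.integrableOn_compact isCompact_Icc).mono_set Set.Ioc_subset_Icc_self
  rw [← ofReal_integral_eq_lintegral_ofReal hint, ← intervalIntegral.integral_of_le ha1,
    intervalIntegral.integral_const_mul, integral_inv_of_pos ha0 one_pos, one_div, log_inv,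
    negMulLog]
  · ring_nf
  · filter_upwards [ae_restrict_mem measurableSet_Ioc] with x hx
    exact mul_nonneg ha (inv_nonneg.2 (ha.trans hx.1.le))

theorem setLIntegral_min_mul_inv {b : ℝ} (hb : 0 ≤ b) (hb1 : b ≤ 1) :
    ∫⁻ x in Set.Ioc 0 1, ENNReal.ofReal (min b x * x⁻¹) = ENNReal.ofReal (b + negMulLog b) := by
  rw [← Set.Ioc_union_Ioc_eq_Ioc hb hb1, lintegral_union measurableSet_Ioc
    (Set.Ioc_disjoint_Ioc_of_le le_rfl), ENNReal.ofReal_add hb (negMulLog_nonneg hb hb1),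
    ofReal_negMulLog_eq_setLIntegral hb hb1]
  congr 1
  · rw [setLIntegral_congr_fun measurableSet_Ioc (g := fun _ => 1) fun x hx => by
      simp [min_eq_right hx.2, mul_inv_cancel₀ hx.1.ne']]
    simp
  · exact setLIntegral_congr_fun measurableSet_Ioc fun x hx => by rw [min_eq_left hx.1.le]

theorem tsum_indicator_Ioc_le_sum {ι κ : Type*} [Fintype κ] {g : ι → ℝ} {M : κ → ℝ}
    (hg0 : ∀ t, 0 ≤ g t) (hg : Summable g) (hM0 : ∀ j, 0 ≤ M j) {x : ℝ} (hx : x ∈ Set.Ioc 0 1)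
    (hmass : ∑' t, (if g t < x then g t else 0) ≤ ∑ j, min (M j) x) :
    ∑' t, (Set.Ioc (g t) 1).indicator (fun y => ENNReal.ofReal (g t * y⁻¹)) x ≤
      ∑ j, ENNReal.ofReal (min (M j) x * x⁻¹) := by
  have hite0 : ∀ t, 0 ≤ (if g t < x then g t else 0) := fun t => by split_ifs <;> simp [hg0 t]
  have hind : ∀ t, (Set.Ioc (g t) 1).indicator (fun y => ENNReal.ofReal (g t * y⁻¹)) x =
      ENNReal.ofReal ((if g t < x then g t else 0) * x⁻¹) := fun t => by
    by_cases hgx : g t < x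
    · simp [Set.indicator_of_mem (show x ∈ Set.Ioc (g t) 1 from ⟨hgx, hx.2⟩), hgx]
    · simp [hgx]
  have hsummable : Summable fun t => if g t < x then g t else 0 :=
    hg.of_nonneg_of_le hite0 fun t => by split_ifs <;> simp [hg0 t]
  have hx0 : 0 ≤ x⁻¹ := inv_nonneg.2 hx.1.le
  rw [tsum_congr hind, ← ENNReal.ofReal_tsum_of_nonneg (fun t => mul_nonneg (hite0 t) hx0)
    (hsummable.mul_right _), ← ENNReal.ofReal_sum_of_nonneg
    fun j _ => mul_nonneg (le_min (hM0 j) hx.1.le) hx0, tsum_mul_right, ← sum_mul]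
  exact ENNReal.ofReal_le_ofReal (mul_le_mul_of_nonneg_right hmass hx0)

theorem tsum_ofReal_negMulLog_le_sum_ofReal {ι κ : Type*} [Countable ι] [Fintype κ] {g : ι → ℝ}
    {M : κ → ℝ} (hg0 : ∀ t, 0 ≤ g t) (hg1 : ∀ t, g t ≤ 1) (hg : Summable g)
    (hM0 : ∀ j, 0 ≤ M j) (hM1 : ∀ j, M j ≤ 1)
    (hmass : ∀ x, 0 < x → ∑' t, (if g t < x then g t else 0) ≤ ∑ j, min (M j) x) :
    ∑' t, ENNReal.ofReal (negMulLog (g t)) ≤ ∑ j, ENNReal.ofReal (M j + negMulLog (M j)) := by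
  set F : ι → ℝ → ENNReal := fun t =>
    (Set.Ioc (g t) 1).indicator fun y => ENNReal.ofReal (g t * y⁻¹)
  have hF : ∀ t, Measurable (F t) := fun t =>
    (measurable_const.mul measurable_inv).ennreal_ofReal.indicator measurableSet_Ioc
  have hsupp : ∀ x ∉ Set.Ioc (0 : ℝ) 1, ∑' t, F t x = 0 := fun x hx => by
    refine ENNReal.tsum_eq_zero.2 fun t => Set.indicator_of_notMem ?_ _
    exact fun hmem => hx ⟨(hg0 t).trans_lt hmem.1, hmem.2⟩
  calc ∑' t, ENNReal.ofReal (negMulLog (g t)) = ∑' t, ∫⁻ x, F t x := by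
        congr with t
        rw [lintegral_indicator measurableSet_Ioc, ofReal_negMulLog_eq_setLIntegral (hg0 t) (hg1 t)]
    _ = ∫⁻ x in Set.Ioc 0 1, ∑' t, F t x := by
        rw [← lintegral_tsum fun t => (hF t).aemeasurable, setLIntegral_eq_of_support_subset]
        exact fun x hx => by_contra fun hx' => hx (hsupp x hx')
    _ ≤ ∫⁻ x in Set.Ioc 0 1, ∑ j, ENNReal.ofReal (min (M j) x * x⁻¹) :=
        setLIntegral_mono' measurableSet_Ioc fun x hx =>
          tsum_indicator_Ioc_le_sum hg0 hg hM0 hx (hmass x hx.1)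
    _ = ∑ j, ENNReal.ofReal (M j + negMulLog (M j)) := by
        rw [lintegral_finsetSum _ fun j _ => by fun_prop]
        exact sum_congr rfl fun j _ => setLIntegral_min_mul_inv (hM0 j) (hM1 j)

theorem tsum_negMulLog_le_sum_add_negMulLog {ι κ : Type*} [Countable ι] [Fintype κ] {g : ι → ℝ}
    {M : κ → ℝ} (hg0 : ∀ t, 0 ≤ g t) (hg1 : ∀ t, g t ≤ 1) (hg : Summable g)
    (hM0 : ∀ j, 0 ≤ M j) (hM1 : ∀ j, M j ≤ 1)
    (hmass : ∀ x, 0 < x → ∑' t, (if g t < x then g t else 0) ≤ ∑ j, min (M j) x) :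
    ∑' t, negMulLog (g t) ≤ ∑ j, (M j + negMulLog (M j)) := by
  have hM : ∀ j, 0 ≤ M j + negMulLog (M j) := fun j =>
    add_nonneg (hM0 j) (negMulLog_nonneg (hM0 j) (hM1 j))
  have h := tsum_ofReal_negMulLog_le_sum_ofReal hg0 hg1 hg hM0 hM1 hmass
  rw [← ENNReal.ofReal_sum_of_nonneg fun j _ => hM j] at h
  calc ∑' t, negMulLog (g t) = (∑' t, ENNReal.ofReal (negMulLog (g t))).toReal := by
        rw [ENNReal.tsum_toReal_eq fun t => ENNReal.ofReal_ne_top]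
        simp only [ENNReal.toReal_ofReal (negMulLog_nonneg (hg0 _) (hg1 _))]
    _ ≤ ∑ j, (M j + negMulLog (M j)) :=
        ENNReal.toReal_le_of_le_ofReal (sum_nonneg fun j _ => hM j) h

theorem tsum_ite_lt_le_tsum_sub_sum_range {g : ℕ → ℝ} (hg0 : ∀ t, 0 ≤ g t) (hg : Summable g)
    {s : ℝ} {T : ℕ} (hT : ∀ t < T, s ≤ g t) :
    ∑' t, (if g t < s then g t else 0) ≤ ∑' t, g t - ∑ t ∈ range T, g t := by
  have hite : ∀ t, (if g t < s then g t else 0) ≤ g t := fun t => by split_ifs <;> simp [hg0 t]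
  have hsummable : Summable fun t => if g t < s then g t else 0 :=
    hg.of_nonneg_of_le (fun t => by split_ifs <;> simp [hg0 t]) hite
  rw [← hsummable.sum_add_tsum_nat_add T, ← hg.sum_add_tsum_nat_add T,
    sum_eq_zero fun t ht => if_neg (not_lt.2 (hT t (mem_range.1 ht))), zero_add,
    add_sub_cancel_left]
  exact ((summable_nat_add_iff T).2 hsummable).tsum_le_tsum (fun t => hite (t + T))
    ((summable_nat_add_iff T).2 hg)

theorem sum_posPart_sub_le_of_antitone {κ : Type*} [LinearOrder κ] [Fintype κ]
    [LocallyFiniteOrderBot κ] {M : κ → ℝ} (hM : Antitone M) {s C : ℝ} (hC : 0 ≤ C)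
    (hprefix : ∀ i, ∑ j ∈ Iic i, (M j - s) ≤ C) : ∑ j, (M j - s)⁺ ≤ C := by
  set F := univ.filter fun j => s < M j
  have hF : ∑ j, (M j - s)⁺ = ∑ j ∈ F, (M j - s) := by
    rw [sum_filter]
    refine sum_congr rfl fun j _ => ?_
    split_ifs with hj
    · exact posPart_eq_self.2 (sub_nonneg.2 hj.le)
    · exact posPart_eq_zero.2 (sub_nonpos.2 (not_lt.1 hj))
  rcases F.eq_empty_or_nonempty with hempty | hne
  · rwa [hF, hempty, sum_empty]
  have hIic : F = Iic (F.max' hne) := by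
    have hmax : s < M (F.max' hne) := (mem_filter.1 (F.max'_mem hne)).2
    ext j
    simp only [F, mem_filter, mem_univ, true_and, mem_Iic]
    exact ⟨fun hj => F.le_max' j (by simpa [F] using hj), fun hj => hmax.trans_le (hM hj)⟩
  rw [hF, hIic]
  exact hprefix _

theorem tsum_negMulLog_geometric {z : ℝ} (hz : 1 < z) :
    ∑' t : ℕ, negMulLog (1 / z * (1 - 1 / z) ^ t) = z * log z - (z - 1) * log (z - 1) := by
  set r := 1 - 1 / z with hr
  have hz0 : 0 < z := one_pos.trans hz
  have hr0 : 0 < r := by rw [hr, sub_pos, div_lt_one hz0]; exact hz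
  have hr1 : r < 1 := by rw [hr]; simp [hz0]
  have hterm : ∀ t : ℕ, negMulLog (1 / z * r ^ t) =
      negMulLog (1 / z) * r ^ t + (-(1 / z) * log r) * (t * r ^ t) := fun t => by
    rw [negMulLog_mul]
    simp only [negMulLog, log_pow]
    ring
  have hnorm : ‖r‖ < 1 := by rwa [norm_of_nonneg hr0.le]
  rw [tsum_congr hterm, ((summable_geometric_of_lt_one hr0.le hr1).mul_left _).tsum_add
    ((by simpa using summable_pow_mul_geometric_of_norm_lt_one 1 hnorm :
      Summable fun t : ℕ => (t : ℝ) * r ^ t).mul_left _), tsum_mul_left, tsum_mul_left,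
    tsum_geometric_of_lt_one hr0.le hr1, tsum_coe_mul_geometric_of_norm_lt_one hnorm]
  have hrz : r = (z - 1) / z := by rw [hr]; field_simp
  rw [negMulLog, one_div, log_inv, hrz, log_div (by linarith) hz0.ne']
  field_simp
  ring

theorem one_le_mul_log_div_sub_one {z : ℝ} (hz : 1 < z) : 1 ≤ z * log (z / (z - 1)) := by
  have hz0 : 0 < z := one_pos.trans hz
  have hlog := log_le_sub_one_of_pos (show 0 < (z - 1) / z by apply div_pos <;> linarith)
  have hz1 : z * ((z - 1) / z - 1) = -1 := by field_simp; ring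
  rw [← inv_div, log_inv]
  nlinarith [mul_le_mul_of_nonneg_left hlog hz0.le]

theorem mul_logb_inv (b x : ℝ) : x * logb b x⁻¹ = negMulLog x / log b := by
  rw [logb, log_inv, negMulLog]
  ring

structure IsGreedyCoupling {ι κ : Type*} [Fintype ι] [Nonempty ι] [Fintype κ] [Nonempty κ]
    [DecidableEq κ]
    (p : ι → ℕ → κ → ℝ) (G : ℕ → ℝ) : Prop where
  nonneg : ∀ ℓ k, 0 ≤ p ℓ 0 k
  sum_eq_one : ∀ ℓ, ∑ k, p ℓ 0 k = 1
  output_eq : ∀ t, G t = univ.inf' univ_nonempty fun ℓ => univ.sup' univ_nonempty (p ℓ t)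
  step : ∀ t ℓ, ∃ k, (∀ k', p ℓ t k' ≤ p ℓ t k) ∧
    p ℓ (t + 1) = Function.update (p ℓ t) k (p ℓ t k - G t)

namespace IsGreedyCoupling

variable {ι κ : Type*} [Fintype ι] [Nonempty ι] [Fintype κ] [Nonempty κ] [DecidableEq κ]
  {p : ι → ℕ → κ → ℝ} {G : ℕ → ℝ}

theorem output_le_sup (h : IsGreedyCoupling p G) (t : ℕ) (ℓ : ι) :
    G t ≤ univ.sup' univ_nonempty (p ℓ t) :=
  (h.output_eq t).trans_le (inf'_le _ (mem_univ ℓ))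

theorem exists_output_eq_sup (h : IsGreedyCoupling p G) (t : ℕ) :
    ∃ ℓ, G t = univ.sup' univ_nonempty (p ℓ t) := by
  obtain ⟨ℓ, -, hℓ⟩ := exists_mem_eq_inf' univ_nonempty fun ℓ => univ.sup' univ_nonempty (p ℓ t)
  exact ⟨ℓ, (h.output_eq t).trans hℓ⟩

theorem residual_nonneg (h : IsGreedyCoupling p G) (t : ℕ) (ℓ : ι) (k : κ) : 0 ≤ p ℓ t k := by
  induction t generalizing k with
  | zero => exact h.nonneg ℓ k
  | succ t ih =>
    obtain ⟨k₀, hmax, hupd⟩ := h.step t ℓ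
    rw [hupd]
    rcases eq_or_ne k k₀ with rfl | hne
    · have : G t ≤ p ℓ t k := (h.output_le_sup t ℓ).trans (sup'_le _ _ fun k' _ => hmax k')
      simpa using this
    · rw [Function.update_of_ne hne]
      exact ih k

theorem output_nonneg (h : IsGreedyCoupling p G) (t : ℕ) : 0 ≤ G t := by
  obtain ⟨ℓ, hℓ⟩ := h.exists_output_eq_sup t
  obtain ⟨k⟩ := ‹Nonempty κ›
  exact hℓ ▸ (h.residual_nonneg t ℓ k).trans (le_sup' _ (mem_univ k))

theorem residual_succ_le (h : IsGreedyCoupling p G) (t : ℕ) (ℓ : ι) (k : κ) :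
    p ℓ (t + 1) k ≤ p ℓ t k := by
  obtain ⟨k₀, -, hupd⟩ := h.step t ℓ
  rw [hupd]
  rcases eq_or_ne k k₀ with rfl | hne
  · simpa using h.output_nonneg t
  · rw [Function.update_of_ne hne]

theorem residual_le_initial (h : IsGreedyCoupling p G) (t : ℕ) (ℓ : ι) (k : κ) :
    p ℓ t k ≤ p ℓ 0 k :=
  antitone_nat_of_succ_le (f := fun t => p ℓ t k) (fun t => h.residual_succ_le t ℓ k)
    (Nat.zero_le t)

theorem sum_residual (h : IsGreedyCoupling p G) (t : ℕ) (ℓ : ι) :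
    ∑ k, p ℓ t k = 1 - ∑ u ∈ range t, G u := by
  induction t with
  | zero => simp [h.sum_eq_one ℓ]
  | succ t ih =>
    obtain ⟨k₀, -, hupd⟩ := h.step t ℓ
    rw [hupd, sum_update_of_mem (mem_univ k₀), sum_range_succ]
    linarith [sum_eq_sum_sdiff_singleton_add (mem_univ k₀) (p ℓ t)]

theorem sum_range_output_le_one (h : IsGreedyCoupling p G) (t : ℕ) :
    ∑ u ∈ range t, G u ≤ 1 := by
  obtain ⟨ℓ⟩ := ‹Nonempty ι›
  have := sum_nonneg fun k (_ : k ∈ univ) => h.residual_nonneg t ℓ k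
  linarith [h.sum_residual t ℓ]

theorem summable_output (h : IsGreedyCoupling p G) : Summable G :=
  summable_of_sum_range_le h.output_nonneg h.sum_range_output_le_one

theorem tsum_output_le_one (h : IsGreedyCoupling p G) : ∑' t, G t ≤ 1 :=
  Real.tsum_le_of_sum_range_le h.output_nonneg h.sum_range_output_le_one

theorem output_le_one (h : IsGreedyCoupling p G) (t : ℕ) : G t ≤ 1 :=
  (h.summable_output.le_tsum t fun u _ => h.output_nonneg u).trans h.tsum_output_le_one

theorem inf'_sum_le (h : IsGreedyCoupling p G) (s : Finset κ) (t : ℕ) :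
    (univ.inf' univ_nonempty fun ℓ => ∑ j ∈ s, p ℓ 0 j) ≤ #s * G t + ∑ u ∈ range t, G u := by
  obtain ⟨ℓ, hℓ⟩ := h.exists_output_eq_sup t
  have hresidual : ∑ j ∈ s, p ℓ t j ≤ #s * G t := by
    simpa using sum_le_card_nsmul s (p ℓ t) (G t) fun j _ => hℓ ▸ le_sup' _ (mem_univ j)
  have hloss : ∑ j ∈ s, (p ℓ 0 j - p ℓ t j) ≤ ∑ u ∈ range t, G u :=
    calc ∑ j ∈ s, (p ℓ 0 j - p ℓ t j) ≤ ∑ j, (p ℓ 0 j - p ℓ t j) :=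
          sum_le_sum_of_subset_of_nonneg (subset_univ s) fun j _ _ =>
            sub_nonneg.2 (h.residual_le_initial t ℓ j)
      _ = ∑ u ∈ range t, G u := by rw [sum_sub_distrib, h.sum_eq_one, h.sum_residual]; ring
  calc (univ.inf' univ_nonempty fun ℓ => ∑ j ∈ s, p ℓ 0 j) ≤ ∑ j ∈ s, p ℓ 0 j :=
        inf'_le _ (mem_univ ℓ)
    _ = ∑ j ∈ s, p ℓ t j + ∑ j ∈ s, (p ℓ 0 j - p ℓ t j) := by rw [sum_sub_distrib]; ring
    _ ≤ #s * G t + ∑ u ∈ range t, G u := add_le_add hresidual hloss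

end IsGreedyCoupling

def IsMeet {ι : Type*} [Fintype ι] [Nonempty ι] {n : ℕ} (q : ι → Fin n → ℝ) (M : Fin n → ℝ) :
    Prop :=
  ∀ i, M i = (univ.inf' univ_nonempty fun ℓ => ∑ j ∈ Iic i, q ℓ j) - ∑ j ∈ Iio i, M j

theorem Fin.Iio_succ_eq_Iic_castSucc {n : ℕ} (i : Fin n) : Iio i.succ = Iic i.castSucc := by
  ext j
  simp [Fin.le_castSucc_iff]

namespace IsMeet

variable {ι : Type*} [Fintype ι] [Nonempty ι] {n : ℕ} {q : ι → Fin n → ℝ} {M : Fin n → ℝ}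

theorem sum_Iic (h : IsMeet q M) (i : Fin n) :
    ∑ j ∈ Iic i, M j = univ.inf' univ_nonempty fun ℓ => ∑ j ∈ Iic i, q ℓ j := by
  rw [← Iio_insert, sum_insert notMem_Iio_self, h i, Iio_insert]
  ring

theorem sum_Iic_le (h : IsMeet q M) (i : Fin n) (ℓ : ι) :
    ∑ j ∈ Iic i, M j ≤ ∑ j ∈ Iic i, q ℓ j :=
  h.sum_Iic i ▸ inf'_le _ (mem_univ ℓ)

theorem sum_Iio_le (h : IsMeet q M) (i : Fin n) (ℓ : ι) :
    ∑ j ∈ Iio i, M j ≤ ∑ j ∈ Iio i, q ℓ j := by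
  cases n with
  | zero => exact i.elim0
  | succ n =>
    induction i using Fin.cases with
    | zero => simp [Iio_eq_empty.2 fun j _ => Fin.zero_le j]
    | succ i => simpa only [Fin.Iio_succ_eq_Iic_castSucc] using h.sum_Iic_le i.castSucc ℓ

theorem le_of_inf'_eq (h : IsMeet q M) {i : Fin n} {ℓ : ι}
    (hℓ : (univ.inf' univ_nonempty fun ℓ' => ∑ j ∈ Iic i, q ℓ' j) = ∑ j ∈ Iic i, q ℓ j) :
    q ℓ i ≤ M i := by
  have := h.sum_Iio_le i ℓ
  rw [h i, hℓ, ← Iio_insert, sum_insert notMem_Iio_self]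
  linarith

theorem nonneg (h : IsMeet q M) (hq : ∀ ℓ j, 0 ≤ q ℓ j) (i : Fin n) : 0 ≤ M i := by
  obtain ⟨ℓ, -, hℓ⟩ := exists_mem_eq_inf' univ_nonempty fun ℓ => ∑ j ∈ Iic i, q ℓ j
  exact (hq ℓ i).trans (h.le_of_inf'_eq hℓ)

theorem antitone (h : IsMeet q M) (hq : ∀ ℓ, Antitone (q ℓ)) : Antitone M := by
  cases n with
  | zero => exact fun i => i.elim0
  | succ n =>
    refine Fin.antitone_iff_succ_le.2 fun i => ?_
    obtain ⟨ℓ, -, hℓ⟩ := exists_mem_eq_inf' univ_nonempty fun ℓ => ∑ j ∈ Iic i.castSucc, q ℓ j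
    have hIic : Iic i.succ = insert i.succ (Iic i.castSucc) := by
      rw [← Fin.Iio_succ_eq_Iic_castSucc, Iio_insert]
    have hsucc : M i.succ ≤ q ℓ i.succ := by
      have hle := h.sum_Iic_le i.succ ℓ
      rw [hIic, sum_insert (by simp), sum_insert (by simp), h.sum_Iic, hℓ] at hle
      linarith
    exact hsucc.trans ((hq ℓ (Fin.castSucc_le_succ i)).trans (h.le_of_inf'_eq hℓ))

theorem sum_eq_one [NeZero n] (h : IsMeet q M) (hq : ∀ ℓ, ∑ j, q ℓ j = 1) : ∑ i, M i = 1 := by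
  rw [← Iic_top, h.sum_Iic, Iic_top]
  simp only [hq, inf'_const]

end IsMeet

section GreedyMeet

variable {ι : Type*} [Fintype ι] [Nonempty ι] {n : ℕ} [NeZero n] {p : ι → ℕ → Fin n → ℝ}
  {G : ℕ → ℝ} {M : Fin n → ℝ}

theorem IsGreedyCoupling.tsum_ite_lt_le_sum_min (hG : IsGreedyCoupling p G)
    (hM : IsMeet (fun ℓ => p ℓ 0) M) (hsort : ∀ ℓ, Antitone (p ℓ 0)) {s : ℝ} (hs : 0 < s) :
    ∑' t, (if G t < s then G t else 0) ≤ ∑ j, min (M j) s := by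
  have hM0 := hM.nonneg hG.nonneg
  by_cases hex : ∃ T, G T < s
  swap
  · simp only [not_exists, not_lt] at hex
    rw [tsum_congr fun t => if_neg (not_lt.2 (hex t)), tsum_zero]
    exact sum_nonneg fun j _ => le_min (hM0 j) hs.le
  classical
  set T := Nat.find hex
  have hlow : ∑' t, (if G t < s then G t else 0) ≤ 1 - ∑ u ∈ range T, G u :=
    (tsum_ite_lt_le_tsum_sub_sum_range hG.output_nonneg hG.summable_output
      fun t ht => not_lt.1 (Nat.find_min hex ht)).trans (by linarith [hG.tsum_output_le_one])
  have hexcess : ∑ j, (M j - s)⁺ ≤ ∑ u ∈ range T, G u := by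
    refine sum_posPart_sub_le_of_antitone (hM.antitone hsort)
      (sum_nonneg fun u _ => hG.output_nonneg u) fun i => ?_
    have hGT : (#(Iic i) : ℝ) * G T ≤ #(Iic i) * s := by
      gcongr
      exact (Nat.find_spec hex).le
    rw [sum_sub_distrib, sum_const, nsmul_eq_mul, hM.sum_Iic]
    linarith [hG.inf'_sum_le (Iic i) T]
  have hmin : ∑ j, min (M j) s = 1 - ∑ j, (M j - s)⁺ := by
    rw [← hM.sum_eq_one hG.sum_eq_one, ← sum_sub_distrib]
    exact sum_congr rfl fun j _ => inf_eq_sub_posPart_sub (M j) s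
  linarith

theorem IsGreedyCoupling.tsum_negMulLog_le (hG : IsGreedyCoupling p G)
    (hM : IsMeet (fun ℓ => p ℓ 0) M) (hsort : ∀ ℓ, Antitone (p ℓ 0)) :
    ∑' t, negMulLog (G t) ≤ 1 + ∑ i, negMulLog (M i) := by
  have hM0 := hM.nonneg hG.nonneg
  have hM1 : ∀ i, M i ≤ 1 := fun i =>
    hM.sum_eq_one hG.sum_eq_one ▸ single_le_sum (fun j _ => hM0 j) (mem_univ i)
  calc ∑' t, negMulLog (G t) ≤ ∑ i, (M i + negMulLog (M i)) :=
        tsum_negMulLog_le_sum_add_negMulLog hG.output_nonneg hG.output_le_one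
          hG.summable_output hM0 hM1 fun x hx => hG.tsum_ite_lt_le_sum_min hM hsort hx
    _ = 1 + ∑ i, negMulLog (M i) := by rw [sum_add_distrib, hM.sum_eq_one hG.sum_eq_one]

end GreedyMeet

/-- **Corollary 1.**  With `G` the greedy coupling output sequence for `S = {p₁,…,p_m}`
and `M` the sorted value sequence of `∧S`:  for every integer `z ≥ 2`,
`H(G_S) ≤ H(∧S) + H(Geom_{1/z}) − log₂(z−1)`, where
`Geom_{1/z}(t) = (1/z)(1−1/z)^{t-1}` (here `t : ℕ` is 0-indexed). -/
theorem greedy_coupling_entropy_le_meet_add_geom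
    (m n : ℕ) [NeZero m] [NeZero n]
    (p : Fin m → ℕ → Fin n → ℝ)      -- residuals: `p ℓ t` before step `t`; `p ℓ 0 = p_ℓ`
    (G : ℕ → ℝ)                       -- greedy output sequence
    (M : Fin n → ℝ)                   -- sorted values of ∧S
    (hsort : ∀ ℓ, Antitone (p ℓ 0))
    (hpos : ∀ ℓ k, 0 ≤ p ℓ 0 k)
    (hsum : ∀ ℓ, ∑ k, p ℓ 0 k = 1)
    (hG : ∀ t, G t = univ.inf' univ_nonempty fun ℓ => univ.sup' univ_nonempty (p ℓ t))
    (hstep : ∀ t ℓ, ∃ k, (∀ k', p ℓ t k' ≤ p ℓ t k) ∧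
      p ℓ (t + 1) = Function.update (p ℓ t) k (p ℓ t k - G t))
    (hM : ∀ i, M i =
      (univ.inf' univ_nonempty fun ℓ => ∑ j ∈ Iic i, p ℓ 0 j) - ∑ j ∈ Iio i, M j)
    (z : ℕ) (hz : 2 ≤ z) :
    (∑' t : ℕ, G t * Real.logb 2 (G t)⁻¹) ≤
      (∑ i, M i * Real.logb 2 (M i)⁻¹) +
        (∑' t : ℕ, ((1 / (z : ℝ)) * (1 - 1 / (z : ℝ)) ^ t) *
          Real.logb 2 ((1 / (z : ℝ)) * (1 - 1 / (z : ℝ)) ^ t)⁻¹) -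
        Real.logb 2 ((z : ℝ) - 1) := by
  have hnats : ∑' t, negMulLog (G t) ≤ 1 + ∑ i, negMulLog (M i) :=
    IsGreedyCoupling.tsum_negMulLog_le ⟨hpos, hsum, hG, hstep⟩ hM hsort
  have hz1 : (1 : ℝ) < z := by exact_mod_cast hz
  have hgeom : 1 ≤ ∑' t : ℕ, negMulLog (1 / z * (1 - 1 / z) ^ t) - log (z - 1) := by
    have := one_le_mul_log_div_sub_one hz1
    rw [log_div (by linarith) (by linarith)] at this
    rw [tsum_negMulLog_geometric hz1]
    linarith
  simp only [mul_logb_inv]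
  rw [tsum_div_const, ← sum_div, tsum_div_const, logb, ← add_div, ← sub_div]
  exact div_le_div_of_nonneg_right (by linarith) (log_pos one_lt_two).le
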